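/- Let d ≥ 1, 0 < p0 ≤ 1, p, q ∈ [p0, ∞] with q ≤ 1, q ≤ p, and 0 < ε ≤ 1. Let Λ, Π ⊆ ℝ^d be relatively separated and let A ∈ C^{p0}(Λ, Π) with envelope H ∈ W(C_b, L^{p0}). Then there is a constant C > 0 independent of ε, j, k such that for all j, k ∈ ℤ^d with |k − j| > 4: if p ≤ 1, then (V^{ε,p}_{j,k})^{q/p} ≤ sup_{ρ∈Π} ∑_{λ∈Λ} |([A, φ^ε_k] φ^ε_j)_{λρ}|^q ≤ C · Δ^{ε,q}(k − j); and if p > 1, then (V^ε_{j,k})^q ≤ C · Δ^{ε,q}(k − j). -/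

import Mathlib

open scoped ENNReal NNReal
open MeasureTheory Metric

attribute [local instance] Classical.propDecidable

noncomputable section

abbrev Ed (d : ℕ) : Type := EuclideanSpace ℝ (Fin d)
abbrev Zd (d : ℕ) : Type := Fin d → ℤ

def zc {d : ℕ} (k : Zd d) : Ed d := WithLp.toLp 2 (fun i => (k i : ℝ))

def lpNorm {ι : Type*} (p : ℝ≥0∞) (c : ι → ℂ) : ℝ :=
  if p = ∞ then ⨆ i, ‖c i‖ else (∑' i, ‖c i‖ ^ p.toReal) ^ (1 / p.toReal)

def elp {ι : Type*} (p : ℝ) (c : ι → ℂ) : ℝ≥0∞ :=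
  (∑' i, (‖c i‖₊ : ℝ≥0∞) ^ p) ^ (1 / p)

def matMul {ι κ : Type*} (a : ι → κ → ℂ) (c : κ → ℂ) : ι → ℂ :=
  fun i => ∑' j, a i j * c j

def MatBoundedOn {ι κ : Type*} (a : ι → κ → ℂ) (p : ℝ≥0∞) : Prop :=
  (∀ c : κ → ℂ, Memℓp c p → (∀ i, Summable fun j => a i j * c j) ∧ Memℓp (matMul a c) p) ∧
  ∃ C > (0:ℝ), ∀ c : κ → ℂ, Memℓp c p → lpNorm p (matMul a c) ≤ C * lpNorm p c

def MatInvertibleOn {ι κ : Type*} (a : ι → κ → ℂ) (p : ℝ≥0∞) : Prop :=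
  MatBoundedOn a p ∧
  (∀ c c' : κ → ℂ, Memℓp c p → Memℓp c' p → matMul a c = matMul a c' → c = c') ∧
  (∀ u : ι → ℂ, Memℓp u p → ∃ c : κ → ℂ, Memℓp c p ∧ matMul a c = u) ∧
  ∃ C > (0:ℝ), ∀ c : κ → ℂ, Memℓp c p → lpNorm p c ≤ C * lpNorm p (matMul a c)

def RelSep {d : ℕ} (Λ : Set (Ed d)) : Prop :=
  (∀ x : Ed d, (Λ ∩ ball x 1).Finite) ∧ ∃ N : ℕ, ∀ x : Ed d, (Λ ∩ ball x 1).ncard ≤ N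

def amalg {d : ℕ} (H : Ed d → ℝ) (x : Ed d) : ℝ :=
  ⨆ y : (closedBall x 1), |H (y : Ed d)|

def MemWiener {d : ℕ} (p : ℝ) (H : Ed d → ℝ) : Prop :=
  Continuous H ∧ (∃ M : ℝ, ∀ x, |H x| ≤ M) ∧ Integrable (fun x => amalg H x ^ p)

def wienerNorm {d : ℕ} (p : ℝ) (H : Ed d → ℝ) : ℝ :=
  (∫ x, amalg H x ^ p) ^ (1 / p)

def phiAct {d : ℕ} {Γ : Set (Ed d)} (φ : Ed d → ℝ) (ε : ℝ) (k : Zd d) (a : Γ → ℂ) : Γ → ℂ :=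
  fun r => (φ (ε • (r : Ed d) - zc k)) • a r

def Phi {d : ℕ} (φ : Ed d → ℝ) (ε : ℝ) (x : Ed d) : ℝ :=
  ∑' k : Zd d, (φ (ε • x - zc k)) ^ 2

def commM {d : ℕ} {Λ Γ : Set (Ed d)} (a : Λ → Γ → ℂ) (φ : Ed d → ℝ) (ε : ℝ) (k j : Zd d) :
    Λ → Γ → ℂ :=
  fun l r => a l r * (((φ (ε • (r : Ed d) - zc k) - φ (ε • (l : Ed d) - zc k)) : ℝ) : ℂ)
      * ((φ (ε • (r : Ed d) - zc j) : ℝ) : ℂ)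

def schurSP {ι κ : Type*} (p : ℝ) (a : ι → κ → ℂ) : ℝ≥0∞ :=
  ⨆ j : κ, ∑' i : ι, (‖a i j‖₊ : ℝ≥0∞) ^ p

def schurE {ι κ : Type*} (a : ι → κ → ℂ) : ℝ≥0∞ :=
  (⨆ j : κ, ∑' i : ι, (‖a i j‖₊ : ℝ≥0∞)) + (⨆ i : ι, ∑' j : κ, (‖a i j‖₊ : ℝ≥0∞))

def cubeSup {d : ℕ} (H : Ed d → ℝ) (q : ℝ) (t : Zd d) : ℝ :=
  ⨆ z : {z : Ed d // ∀ i, (t i : ℝ) ≤ z i ∧ z i ≤ (t i : ℝ) + 1}, |H (z : Ed d)| ^ q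

def DeltaE {d : ℕ} (H : Ed d → ℝ) (ε q : ℝ) (s : Zd d) : ℝ≥0∞ :=
  ∑' t : Zd d, if (∀ i, |ε * (t i : ℝ) - (s i : ℝ)| ≤ 5) then ENNReal.ofReal (cubeSup H q t) else 0

lemma coord_abs_le_norm {d : ℕ} (x : Ed d) (i : Fin d) : |x i| ≤ ‖x‖ := by
  rw [EuclideanSpace.norm_eq, ← Real.sqrt_sq_eq_abs]
  apply Real.sqrt_le_sqrt
  have hxx : x i ^ 2 = ‖x i‖ ^ 2 := by rw [Real.norm_eq_abs, sq_abs]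
  rw [hxx]
  exact Finset.single_le_sum (f := fun j => ‖x j‖ ^ 2) (fun j _ => sq_nonneg _) (Finset.mem_univ i)

lemma zc_sub {d : ℕ} (k j : Zd d) : zc (k - j) = zc k - zc j := by
  ext i
  simp [zc]

lemma tsum_rpow_le {ι : Type*} (f : ι → ℝ≥0∞) {r : ℝ} (hr : 1 ≤ r) :
    ∑' i, f i ^ r ≤ (∑' i, f i) ^ r := by
  set S := ∑' i, f i with hSdef
  by_cases hS0 : S = 0
  · have hz : ∀ i, f i = 0 := by
      intro i
      have := ENNReal.le_tsum (f := f) i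
      rw [← hSdef, hS0] at this
      simpa using this
    simp [hz, ENNReal.zero_rpow_of_pos (by linarith : (0:ℝ) < r)]
  by_cases hS : S = ⊤
  · rw [hS, ENNReal.top_rpow_of_pos (by linarith)]; exact le_top
  have key : ∀ i, f i ^ r ≤ f i * S ^ (r - 1) := by
    intro i
    by_cases hfi : f i = 0
    · simp [hfi, ENNReal.zero_rpow_of_pos (by linarith : (0:ℝ) < r)]
    · have hfit : f i ≠ ⊤ := ne_top_of_le_ne_top hS (ENNReal.le_tsum i)
      have h1 : f i ^ r = f i ^ (1:ℝ) * f i ^ (r-1) := by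
        rw [← ENNReal.rpow_add _ _ hfi hfit]; ring_nf
      rw [h1, ENNReal.rpow_one]
      exact mul_le_mul_right (ENNReal.rpow_le_rpow (ENNReal.le_tsum i) (by linarith)) _
  calc ∑' i, f i ^ r ≤ ∑' i, f i * S^(r-1) := ENNReal.tsum_le_tsum key
    _ = S * S^(r-1) := by rw [ENNReal.tsum_mul_right]
    _ = S ^ r := by
        have h2 : S * S^(r-1) = S^(1:ℝ) * S^(r-1) := by rw [ENNReal.rpow_one]
        rw [h2, ← ENNReal.rpow_add _ _ hS0 hS]
        ring_nf

lemma rpow_tsum_le {ι : Type*} (f : ι → ℝ≥0∞) {q : ℝ} (h0 : 0 < q) (h1 : q ≤ 1) :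
    (∑' i, f i) ^ q ≤ ∑' i, f i ^ q := by
  have h := tsum_rpow_le (fun i => f i ^ q) (r := 1/q)
    (by rw [le_div_iff₀ h0]; linarith)
  have e : ∀ i, (f i ^ q) ^ (1/q) = f i := by
    intro i
    rw [← ENNReal.rpow_mul, mul_one_div_cancel h0.ne', ENNReal.rpow_one]
  rw [tsum_congr e] at h
  calc (∑' i, f i)^q ≤ ((∑' i, f i ^ q)^(1/q))^q := ENNReal.rpow_le_rpow h h0.le
    _ = ∑' i, f i ^ q := by rw [← ENNReal.rpow_mul, one_div_mul_cancel h0.ne', ENNReal.rpow_one]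

def ind (P : Prop) : ℝ≥0∞ := if P then 1 else 0
lemma ind_of_true {P : Prop} (h : P) : ind P = 1 := by simp [ind, h]
lemma ind_of_false {P : Prop} (h : ¬ P) : ind P = 0 := by simp [ind, h]

lemma subcube_choice {d : ℕ} (hd : 1 ≤ d) {s : ℝ} (hs0 : 0 ≤ s) (hs1 : s ≤ 1) :
    ∃ u : Fin d, |s - (((u : ℕ) : ℝ) + 1/2)/d| ≤ 1/(2*d) := by
  have hd0 : (0:ℝ) < d := by exact_mod_cast hd
  have hm0 : 0 ≤ ⌊(d:ℝ) * s⌋ := Int.le_floor.2 (by simpa using mul_nonneg hd0.le hs0)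
  refine ⟨⟨min (⌊(d:ℝ) * s⌋).toNat (d-1), by omega⟩, ?_⟩
  set m : ℕ := min (⌊(d:ℝ) * s⌋).toNat (d-1) with hm
  have key : (m : ℝ) ≤ s * d ∧ s * d ≤ (m : ℝ) + 1 := by
    by_cases hc : (⌊(d:ℝ) * s⌋).toNat ≤ d - 1
    · have hui : (m : ℝ) = ((⌊(d:ℝ) * s⌋ : ℤ) : ℝ) := by
        rw [hm, min_eq_left hc]
        have := Int.toNat_of_nonneg hm0
        exact_mod_cast congrArg (fun z : ℤ => (z : ℝ)) this
      constructor
      · rw [hui]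
        calc ((⌊(d:ℝ) * s⌋ : ℤ) : ℝ) ≤ (d:ℝ) * s := Int.floor_le _
          _ = s * d := by ring
      · rw [hui]
        have := Int.lt_floor_add_one ((d:ℝ) * s)
        linarith
    · have hui : (m : ℝ) = (d:ℝ) - 1 := by
        have h1 : m = d - 1 := by rw [hm]; omega
        rw [h1]
        push_cast [hd]
        ring
      have hge : (d:ℝ) ≤ ((⌊(d:ℝ) * s⌋ : ℤ) : ℝ) := by
        have h2 : (d:ℤ) ≤ ⌊(d:ℝ) * s⌋ := by omega
        exact_mod_cast h2
      have hs1' : s = 1 := by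
        have := le_trans hge (Int.floor_le _)
        nlinarith
      rw [hui, hs1']
      constructor <;> linarith
  have hrw : s - (((m:ℕ) : ℝ) + 1/2)/d = (s * d - ((m:ℝ) + 1/2))/d := by
    field_simp
  rw [hrw, abs_div, abs_of_pos hd0, div_le_div_iff₀ hd0 (by positivity)]
  have habs : |s * d - ((m:ℝ) + 1/2)| ≤ 1/2 := by
    rw [abs_le]
    constructor <;> linarith [key.1, key.2]
  calc |s * d - ((m:ℝ) + 1/2)| * (2*d) ≤ (1/2) * (2*d) :=
        mul_le_mul_of_nonneg_right habs (by positivity)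
    _ = 1 * d := by ring

lemma countBall {d : ℕ} {Θ : Set (Ed d)} {N : ℕ}
    (hfin : ∀ x : Ed d, (Θ ∩ ball x 1).Finite)
    (hN : ∀ x : Ed d, (Θ ∩ ball x 1).ncard ≤ N)
    (P : Θ → Prop) (x : Ed d) (h : ∀ θ : Θ, P θ → (θ : Ed d) ∈ ball x 1) :
    ∑' θ : Θ, ind (P θ) ≤ N := by
  set s : Set Θ := {θ | P θ} with hs
  have e1 : ∑' θ : Θ, ind (P θ) = ∑' (_ : s), (1:ℝ≥0∞) := by
    rw [tsum_subtype s (fun _ => (1:ℝ≥0∞))]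
    refine tsum_congr fun θ => ?_
    by_cases hθ : P θ <;> simp [Set.indicator_apply, ind, hs, hθ]
  rw [e1, ENNReal.tsum_set_one]
  have himg : Subtype.val '' s ⊆ Θ ∩ ball x 1 := by
    rintro y ⟨θ, hθ, rfl⟩
    exact ⟨θ.2, h θ hθ⟩
  have h1 : s.encard = (Subtype.val '' s).encard :=
    (Subtype.val_injective.encard_image s).symm
  have h2 : (Subtype.val '' s).encard ≤ (Θ ∩ ball x 1).encard := Set.encard_mono himg
  have h3 : (Θ ∩ ball x 1).encard ≤ (N : ℕ∞) := by
    rw [Set.Finite.encard_eq_coe_toFinset_card (hfin x)]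
    exact_mod_cast le_trans (le_of_eq (Set.ncard_eq_toFinset_card _ (hfin x)).symm) (hN x)
  have hfinal : s.encard ≤ (N : ℕ∞) := h1 ▸ le_trans h2 h3
  exact_mod_cast ENat.toENNReal_le.mpr hfinal

lemma countCube {d : ℕ} (hd : 1 ≤ d) {Θ : Set (Ed d)} {N : ℕ}
    (hfin : ∀ x : Ed d, (Θ ∩ ball x 1).Finite)
    (hN : ∀ x : Ed d, (Θ ∩ ball x 1).ncard ≤ N)
    (P : Θ → Prop) (b : Fin d → ℝ)
    (h : ∀ θ : Θ, P θ → ∀ i, b i ≤ (θ : Ed d) i ∧ (θ : Ed d) i ≤ b i + 1) :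
    ∑' θ : Θ, ind (P θ) ≤ ((d ^ d * N : ℕ) : ℝ≥0∞) := by
  have hd0 : (0:ℝ) < d := by exact_mod_cast hd
  have hd1 : (1:ℝ) ≤ d := by exact_mod_cast hd
  set Q : (Fin d → Fin d) → Θ → Prop := fun u θ =>
    P θ ∧ ∀ i, |(θ : Ed d) i - (b i + ((u i : ℝ) + 1/2)/d)| ≤ 1/(2*d) with hQ
  have pointwise : ∀ θ : Θ, ind (P θ) ≤ ∑' u : (Fin d → Fin d), ind (Q u θ) := by
    intro θ
    by_cases hP : P θ
    · have hcoord := h θ hP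
      have hex : ∀ i : Fin d, ∃ v : Fin d,
          |((θ : Ed d) i - b i) - (((v : ℕ) : ℝ) + 1/2)/d| ≤ 1/(2*d) := by
        intro i
        exact subcube_choice hd (by linarith [(hcoord i).1]) (by linarith [(hcoord i).2])
      choose u hu using hex
      have hQu : Q u θ := by
        refine ⟨hP, fun i => ?_⟩
        have hui := hu i
        have he : (θ : Ed d) i - (b i + (((u i : ℕ) : ℝ) + 1/2)/d)
            = ((θ : Ed d) i - b i) - (((u i : ℕ) : ℝ) + 1/2)/d := by ring
        rw [he]
        exact hui
      calc ind (P θ) = 1 := ind_of_true hP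
        _ = ind (Q u θ) := (ind_of_true hQu).symm
        _ ≤ _ := ENNReal.le_tsum u
    · rw [ind_of_false hP]; exact zero_le
  have hball : ∀ u : Fin d → Fin d, ∀ θ : Θ, Q u θ →
      (θ : Ed d) ∈ ball (show Ed d from WithLp.toLp 2 fun i => b i + ((u i : ℝ) + 1/2)/d) 1 := by
    intro u θ hQu
    set xu : Ed d := WithLp.toLp 2 fun i => b i + ((u i : ℝ) + 1/2)/d with hxu
    rw [mem_ball, dist_eq_norm]
    have hco : ∀ i, ‖((θ : Ed d) - xu) i‖ ^ 2 ≤ (1/(2*(d:ℝ)))^2 := by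
      intro i
      have h2 := hQu.2 i
      have he : ‖((θ : Ed d) - xu) i‖ = |(θ : Ed d) i - (b i + ((u i : ℝ) + 1/2)/d)| := by
        rw [PiLp.sub_apply, Real.norm_eq_abs, hxu]
      rw [he]
      have habs0 : (0:ℝ) ≤ |(θ : Ed d) i - (b i + ((u i : ℝ) + 1/2)/d)| := abs_nonneg _
      nlinarith [h2]
    rw [EuclideanSpace.norm_eq]
    have hsum : ∑ i, ‖((θ : Ed d) - xu) i‖ ^ 2 ≤ (d:ℝ) * (1/(2*(d:ℝ)))^2 := by
      calc ∑ i, ‖((θ : Ed d) - xu) i‖ ^ 2 ≤ ∑ _i : Fin d, (1/(2*(d:ℝ)))^2 :=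
            Finset.sum_le_sum (fun i _ => hco i)
        _ = (d:ℝ) * (1/(2*(d:ℝ)))^2 := by
            rw [Finset.sum_const, Finset.card_univ, Fintype.card_fin, nsmul_eq_mul]
    have hlt : ∑ i, ‖((θ : Ed d) - xu) i‖ ^ 2 < 1 := by
      have he : (d:ℝ) * (1/(2*(d:ℝ)))^2 = 1/(4*d) := by
        field_simp
        ring
      have hq4 : (1:ℝ)/(4*d) < 1 := by
        rw [div_lt_one (by positivity)]
        linarith
      linarith [hsum, he ▸ hsum]
    calc Real.sqrt (∑ i, ‖((θ : Ed d) - xu) i‖ ^ 2) < Real.sqrt 1 :=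
          Real.sqrt_lt_sqrt (by positivity) hlt
      _ = 1 := Real.sqrt_one
  calc ∑' θ : Θ, ind (P θ)
      ≤ ∑' θ : Θ, ∑' u : (Fin d → Fin d), ind (Q u θ) := ENNReal.tsum_le_tsum pointwise
    _ = ∑' u : (Fin d → Fin d), ∑' θ : Θ, ind (Q u θ) := ENNReal.tsum_comm
    _ ≤ ∑' _u : (Fin d → Fin d), (N : ℝ≥0∞) :=
        ENNReal.tsum_le_tsum (fun u => countBall hfin hN (Q u) _ (hball u))
    _ = ((d ^ d * N : ℕ) : ℝ≥0∞) := by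
        rw [tsum_fintype]
        simp only [Finset.sum_const, Finset.card_univ, nsmul_eq_mul]
        have hc : Fintype.card (Fin d → Fin d) = d ^ d := by
          rw [Fintype.card_fun, Fintype.card_fin]
        rw [hc]
        push_cast
        ring

lemma le_cubeSup {d : ℕ} {H : Ed d → ℝ} {MH : ℝ} (hMH : ∀ x, |H x| ≤ MH) {q : ℝ} (hq : 0 ≤ q)
    (m : Zd d) (x : Ed d) (hx : ∀ i, (m i : ℝ) ≤ x i ∧ x i ≤ (m i : ℝ) + 1) :
    |H x| ^ q ≤ cubeSup H q m := by
  have hbdd : BddAbove (Set.range fun z : {z : Ed d // ∀ i, (m i : ℝ) ≤ z i ∧ z i ≤ (m i : ℝ) + 1} =>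
      |H (z : Ed d)| ^ q) := by
    refine ⟨MH ^ q, ?_⟩
    rintro y ⟨z, rfl⟩
    exact Real.rpow_le_rpow (abs_nonneg _) (hMH _) hq
  exact le_ciSup hbdd ⟨x, hx⟩

lemma sumBound {d : ℕ} (hd : 1 ≤ d) {Θ : Set (Ed d)} {N : ℕ}
    (hfin : ∀ x : Ed d, (Θ ∩ ball x 1).Finite)
    (hN : ∀ x : Ed d, (Θ ∩ ball x 1).ncard ≤ N)
    (g : Θ → ℝ≥0∞) (H : Ed d → ℝ) (MH : ℝ) (hMH : ∀ x, |H x| ≤ MH)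
    {q ε : ℝ} (hq : 0 < q) (hε0 : 0 < ε) (hε1 : ε ≤ 1) (s : Zd d)
    (P : Θ → Prop) (w : Θ → Ed d) (σ : ℝ) (hσ : σ = 1 ∨ σ = -1) (c : Ed d)
    (hw : ∀ θ : Θ, ∀ i, (θ : Ed d) i = c i + σ * w θ i)
    (hg : ∀ θ : Θ, g θ ≤ ind (P θ) * ENNReal.ofReal (|H (w θ)| ^ q))
    (hadm : ∀ θ : Θ, P θ → ∀ i, |ε * (w θ i) - ((s i : ℝ))| ≤ 4) :
    ∑' θ : Θ, g θ ≤ ((d ^ d * N : ℕ) : ℝ≥0∞) * DeltaE H ε q s := by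
  set t : Θ → Zd d := fun θ i => ⌊w θ i⌋ with ht
  set D : Zd d → ℝ≥0∞ := fun m =>
    if (∀ i, |ε * (m i : ℝ) - (s i : ℝ)| ≤ 5) then ENNReal.ofReal (cubeSup H q m) else 0 with hD
  have hDelta : DeltaE H ε q s = ∑' m, D m := rfl
  have htfl : ∀ θ : Θ, ∀ i, ((t θ i : ℤ) : ℝ) ≤ w θ i ∧ w θ i ≤ ((t θ i : ℤ) : ℝ) + 1 := by
    intro θ i
    exact ⟨Int.floor_le _, (Int.lt_floor_add_one _).le⟩
  have step1 : ∀ θ : Θ, g θ ≤ ∑' m : Zd d, ind (t θ = m ∧ P θ) * D m := by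
    intro θ
    by_cases hP : P θ
    · have hsup : |H (w θ)| ^ q ≤ cubeSup H q (t θ) := le_cubeSup hMH hq.le _ _ (htfl θ)
      have hadm' : ∀ i, |ε * ((t θ i : ℤ) : ℝ) - (s i : ℝ)| ≤ 5 := by
        intro i
        have h1 := hadm θ hP i
        have h2 := (htfl θ i).1
        have h3 := (htfl θ i).2
        rw [abs_le] at h1 ⊢
        constructor <;> nlinarith [h1.1, h1.2, mul_le_mul_of_nonneg_left h2 hε0.le,
          mul_le_mul_of_nonneg_left h3 hε0.le]
      have hDt : D (t θ) = ENNReal.ofReal (cubeSup H q (t θ)) := by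
        rw [hD]; exact if_pos hadm'
      have hg1 : g θ ≤ ENNReal.ofReal (|H (w θ)| ^ q) := by
        have := hg θ
        rwa [ind_of_true hP, one_mul] at this
      calc g θ ≤ ENNReal.ofReal (|H (w θ)| ^ q) := hg1
        _ ≤ ENNReal.ofReal (cubeSup H q (t θ)) := ENNReal.ofReal_le_ofReal hsup
        _ = ind (t θ = t θ ∧ P θ) * D (t θ) := by rw [ind_of_true ⟨rfl, hP⟩, one_mul, hDt]
        _ ≤ _ := ENNReal.le_tsum (t θ)
    · have h0 : g θ ≤ 0 := le_trans (hg θ) (by rw [ind_of_false hP, zero_mul])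
      exact le_trans h0 zero_le
  calc ∑' θ, g θ ≤ ∑' θ, ∑' m, ind (t θ = m ∧ P θ) * D m := ENNReal.tsum_le_tsum step1
    _ = ∑' m, ∑' θ, ind (t θ = m ∧ P θ) * D m := ENNReal.tsum_comm
    _ = ∑' m, (∑' θ, ind (t θ = m ∧ P θ)) * D m := by
        refine tsum_congr fun m => ?_
        rw [ENNReal.tsum_mul_right]
    _ ≤ ∑' m, ((d ^ d * N : ℕ) : ℝ≥0∞) * D m := by
        refine ENNReal.tsum_le_tsum fun m => ?_
        refine mul_le_mul_left ?_ _
        refine countCube hd hfin hN _ (fun i => c i + σ * ((m i : ℤ) : ℝ) + (σ - 1)/2) ?_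
        rintro θ ⟨htm, hPθ⟩ i
        have hwi1 : ((m i : ℤ) : ℝ) ≤ w θ i := by
          have := (htfl θ i).1; rw [htm] at this; exact this
        have hwi2 : w θ i ≤ ((m i : ℤ) : ℝ) + 1 := by
          have := (htfl θ i).2; rw [htm] at this; exact this
        have hth := hw θ i
        rcases hσ with hσ1 | hσ1 <;> rw [hσ1] at hth ⊢ <;> constructor <;> linarith
    _ = _ := by rw [ENNReal.tsum_mul_left, hDelta]

lemma far_support {d : ℕ} {j k : Zd d} (hfar : 4 < ‖zc (k - j)‖) (x : Ed d)
    (hr : ‖x - zc j‖ < 2) : 2 ≤ ‖x - zc k‖ := by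
  have htri : dist (zc k) (zc j) ≤ dist (zc k) x + dist x (zc j) := dist_triangle _ _ _
  rw [dist_eq_norm, dist_eq_norm] at htri
  have h4 : 4 < ‖zc k - zc j‖ := by rwa [zc_sub] at hfar
  have hrev : ‖zc k - x‖ = ‖x - zc k‖ := norm_sub_rev _ _
  rw [dist_eq_norm] at htri
  linarith

lemma commM_vanish {d : ℕ} {Λ Γ : Set (Ed d)} {a : Λ → Γ → ℂ} {φ : Ed d → ℝ} {ε : ℝ}
    {j k : Zd d} (hφsupp : ∀ x : Ed d, 2 ≤ ‖x‖ → φ x = 0)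
    (hfar : 4 < ‖zc (k - j)‖) (l : Λ) (r : Γ)
    (h : ¬(‖ε • (l : Ed d) - zc k‖ < 2 ∧ ‖ε • (r : Ed d) - zc j‖ < 2)) :
    commM a φ ε k j l r = 0 := by
  by_cases hr : ‖ε • (r : Ed d) - zc j‖ < 2
  · have hl : ¬ ‖ε • (l : Ed d) - zc k‖ < 2 := fun hl => h ⟨hl, hr⟩
    have hrk : 2 ≤ ‖ε • (r : Ed d) - zc k‖ := far_support hfar _ hr
    simp [commM, hφsupp _ hrk, hφsupp _ (not_lt.1 hl)]
  · simp [commM, hφsupp _ (not_lt.1 hr)]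

lemma commM_le {d : ℕ} {Λ Γ : Set (Ed d)} {a : Λ → Γ → ℂ} {φ : Ed d → ℝ} {ε : ℝ}
    {j k : Zd d} (hφ0 : ∀ x, 0 ≤ φ x) (hφ1 : ∀ x, φ x ≤ 1)
    (hφsupp : ∀ x : Ed d, 2 ≤ ‖x‖ → φ x = 0)
    (hfar : 4 < ‖zc (k - j)‖) {H : Ed d → ℝ}
    (henv : ∀ (l : Λ) (r : Γ), ‖a l r‖ ≤ H ((l : Ed d) - (r : Ed d))) (l : Λ) (r : Γ)
    (hl : ‖ε • (l : Ed d) - zc k‖ < 2) (hr : ‖ε • (r : Ed d) - zc j‖ < 2) :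
    ‖commM a φ ε k j l r‖ ≤ |H ((l : Ed d) - (r : Ed d))| := by
  have hrk : 2 ≤ ‖ε • (r : Ed d) - zc k‖ := far_support hfar _ hr
  have h0 : φ (ε • (r : Ed d) - zc k) = 0 := hφsupp _ hrk
  have hmid : |φ (ε • (r : Ed d) - zc k) - φ (ε • (l : Ed d) - zc k)| ≤ 1 := by
    rw [h0, zero_sub, abs_neg, abs_of_nonneg (hφ0 _)]; exact hφ1 _
  have hlast : |φ (ε • (r : Ed d) - zc j)| ≤ 1 := by
    rw [abs_of_nonneg (hφ0 _)]; exact hφ1 _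
  have hHa : ‖a l r‖ ≤ |H ((l : Ed d) - (r : Ed d))| := le_trans (henv l r) (le_abs_self _)
  calc ‖commM a φ ε k j l r‖
      = ‖a l r‖ * |φ (ε • (r : Ed d) - zc k) - φ (ε • (l : Ed d) - zc k)|
        * |φ (ε • (r : Ed d) - zc j)| := by
        simp [commM, norm_mul, ← Complex.ofReal_sub, Complex.norm_real, Real.norm_eq_abs]
    _ ≤ |H ((l : Ed d) - (r : Ed d))| * 1 * 1 := by
        gcongr <;> first | exact abs_nonneg _ | skip
    _ = _ := by ring

theorem stmt14 (d : ℕ) (hd : 1 ≤ d)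
    (p₀ : ℝ) (h00 : 0 < p₀) (h01 : p₀ ≤ 1)
    (p : ℝ≥0∞) (hp : ENNReal.ofReal p₀ ≤ p)
    (q : ℝ) (hq0 : p₀ ≤ q) (hq1 : q ≤ 1) (hqp : ENNReal.ofReal q ≤ p)
    (φ : Ed d → ℝ)
    (hφsm : ContDiff ℝ (⊤ : ℕ∞) φ) (hφ0 : ∀ x, 0 ≤ φ x) (hφ1 : ∀ x, φ x ≤ 1)
    (hφsupp : ∀ x : Ed d, 2 ≤ ‖x‖ → φ x = 0)
    (hφpart : ∀ x : Ed d, HasSum (fun k : Zd d => φ (x - zc k)) 1)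
    (Λ Γ : Set (Ed d)) (hΛ : RelSep Λ) (hΓ : RelSep Γ)
    (a : Λ → Γ → ℂ) (H : Ed d → ℝ) (hH : MemWiener p₀ H)
    (henv : ∀ (l : Λ) (r : Γ), ‖a l r‖ ≤ H ((l : Ed d) - (r : Ed d))) :
    ∃ C > (0:ℝ), ∀ ε : ℝ, 0 < ε → ε ≤ 1 → ∀ j k : Zd d, 4 < ‖zc (k - j)‖ →
      (p ≤ 1 →
        schurSP p.toReal (commM a φ ε k j) ^ (q / p.toReal) ≤
          (⨆ r : Γ, ∑' l : Λ, (‖commM a φ ε k j l r‖₊ : ℝ≥0∞) ^ q) ∧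
        (⨆ r : Γ, ∑' l : Λ, (‖commM a φ ε k j l r‖₊ : ℝ≥0∞) ^ q) ≤
          ENNReal.ofReal C * DeltaE H ε q (k - j)) ∧
      (1 < p →
        schurE (commM a φ ε k j) ^ q ≤ ENNReal.ofReal C * DeltaE H ε q (k - j)) := by
  obtain ⟨hfinΛ, NΛ, hNΛ⟩ := hΛ
  obtain ⟨hfinΓ, NΓ, hNΓ⟩ := hΓ
  obtain ⟨hHc, ⟨MH, hMH⟩, hHint⟩ := hH
  have hq0' : 0 < q := lt_of_lt_of_le h00 hq0
  refine ⟨((d^d*NΛ + d^d*NΓ + 1 : ℕ) : ℝ), by positivity, ?_⟩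
  intro ε hε0 hε1 j k hfar
  have hofC : ((d^d*NΛ : ℕ) : ℝ≥0∞) + ((d^d*NΓ : ℕ) : ℝ≥0∞)
      ≤ ENNReal.ofReal ((d^d*NΛ + d^d*NΓ + 1 : ℕ) : ℝ) := by
    rw [ENNReal.ofReal_natCast]
    have hle : (d^d*NΛ : ℕ) + (d^d*NΓ : ℕ) ≤ d^d*NΛ + d^d*NΓ + 1 := Nat.le_succ _
    exact_mod_cast hle
  -- coordinate computations
  have ecoord : ∀ (x : Ed d) (m : Zd d) (i : Fin d),
      (ε • x - zc m) i = ε * x i - (m i : ℝ) := by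
    intro x m i
    rw [PiLp.sub_apply, PiLp.smul_apply, smul_eq_mul]
    simp [zc]
  have hadm2 : ∀ (l : Λ) (r : Γ),
      (‖ε • (l : Ed d) - zc k‖ < 2 ∧ ‖ε • (r : Ed d) - zc j‖ < 2) →
      ∀ i, |ε * (((l : Ed d) - (r : Ed d)) i) - (((k - j) i : ℤ) : ℝ)| ≤ 4 := by
    intro l r hP i
    have h1 : |(ε • (l : Ed d) - zc k) i| ≤ ‖ε • (l : Ed d) - zc k‖ := coord_abs_le_norm _ i
    have h2 : |(ε • (r : Ed d) - zc j) i| ≤ ‖ε • (r : Ed d) - zc j‖ := coord_abs_le_norm _ i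
    rw [ecoord] at h1 h2
    have e3 : ε * (((l : Ed d) - (r : Ed d)) i) - (((k - j) i : ℤ) : ℝ)
        = (ε * (l : Ed d) i - (k i : ℝ)) - (ε * (r : Ed d) i - (j i : ℝ)) := by
      rw [PiLp.sub_apply, Pi.sub_apply]
      push_cast
      ring
    rw [e3]
    calc |(ε * (l : Ed d) i - (k i : ℝ)) - (ε * (r : Ed d) i - (j i : ℝ))|
        ≤ |ε * (l : Ed d) i - (k i : ℝ)| + |ε * (r : Ed d) i - (j i : ℝ)| := abs_sub _ _
      _ ≤ 4 := by linarith [hP.1, hP.2]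
  have hgball : ∀ (l : Λ) (r : Γ), (‖commM a φ ε k j l r‖₊ : ℝ≥0∞) ^ q ≤
      ind (‖ε • (l : Ed d) - zc k‖ < 2 ∧ ‖ε • (r : Ed d) - zc j‖ < 2) *
        ENNReal.ofReal (|H ((l : Ed d) - (r : Ed d))| ^ q) := by
    intro l r
    by_cases hP : (‖ε • (l : Ed d) - zc k‖ < 2 ∧ ‖ε • (r : Ed d) - zc j‖ < 2)
    · rw [ind_of_true hP, one_mul, ← enorm_eq_nnnorm, ← ofReal_norm,
        ENNReal.ofReal_rpow_of_nonneg (norm_nonneg _) hq0'.le]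
      exact ENNReal.ofReal_le_ofReal (Real.rpow_le_rpow (norm_nonneg _)
        (commM_le hφ0 hφ1 hφsupp hfar henv l r hP.1 hP.2) hq0'.le)
    · rw [ind_of_false hP, zero_mul, commM_vanish hφsupp hfar l r hP]
      simp [ENNReal.zero_rpow_of_pos hq0']
  have col : ∀ r : Γ, ∑' l : Λ, (‖commM a φ ε k j l r‖₊ : ℝ≥0∞) ^ q
      ≤ ((d^d*NΛ : ℕ) : ℝ≥0∞) * DeltaE H ε q (k - j) := by
    intro r
    refine sumBound hd hfinΛ hNΛ _ H MH hMH hq0' hε0 hε1 (k - j)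
      (fun l : Λ => ‖ε • (l : Ed d) - zc k‖ < 2 ∧ ‖ε • (r : Ed d) - zc j‖ < 2)
      (fun l : Λ => (l : Ed d) - (r : Ed d)) 1 (Or.inl rfl) (r : Ed d) ?_ ?_ ?_
    · intro l i
      show (l : Ed d) i = (r : Ed d) i + 1 * (((l : Ed d) - (r : Ed d)) i)
      rw [PiLp.sub_apply]
      ring
    · intro l
      exact hgball l r
    · intro l hP i
      exact hadm2 l r hP i
  have row : ∀ l : Λ, ∑' r : Γ, (‖commM a φ ε k j l r‖₊ : ℝ≥0∞) ^ q
      ≤ ((d^d*NΓ : ℕ) : ℝ≥0∞) * DeltaE H ε q (k - j) := by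
    intro l
    refine sumBound hd hfinΓ hNΓ _ H MH hMH hq0' hε0 hε1 (k - j)
      (fun r : Γ => ‖ε • (l : Ed d) - zc k‖ < 2 ∧ ‖ε • (r : Ed d) - zc j‖ < 2)
      (fun r : Γ => (l : Ed d) - (r : Ed d)) (-1) (Or.inr rfl) (l : Ed d) ?_ ?_ ?_
    · intro r i
      show (r : Ed d) i = (l : Ed d) i + (-1) * (((l : Ed d) - (r : Ed d)) i)
      rw [PiLp.sub_apply]
      ring
    · intro r
      exact hgball l r
    · intro r hP i
      exact hadm2 l r hP i
  constructor
  · -- p ≤ 1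
    intro hple
    have hpne : p ≠ ⊤ := ne_top_of_le_ne_top ENNReal.one_ne_top hple
    have hqpt : q ≤ p.toReal := by
      have := ENNReal.toReal_mono hpne hqp
      rwa [ENNReal.toReal_ofReal hq0'.le] at this
    have hpt0 : 0 < p.toReal := lt_of_lt_of_le hq0' hqpt
    constructor
    · set b := ⨆ r : Γ, ∑' l : Λ, (‖commM a φ ε k j l r‖₊ : ℝ≥0∞) ^ q with hb
      have per : ∀ r : Γ, ∑' l : Λ, (‖commM a φ ε k j l r‖₊ : ℝ≥0∞) ^ p.toReal
          ≤ (∑' l : Λ, (‖commM a φ ε k j l r‖₊ : ℝ≥0∞) ^ q) ^ (p.toReal / q) := by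
        intro r
        have h := tsum_rpow_le (fun l : Λ => (‖commM a φ ε k j l r‖₊ : ℝ≥0∞) ^ q)
          (r := p.toReal / q) (by rw [le_div_iff₀ hq0']; linarith)
        calc ∑' l : Λ, (‖commM a φ ε k j l r‖₊ : ℝ≥0∞) ^ p.toReal
            = ∑' l : Λ, ((‖commM a φ ε k j l r‖₊ : ℝ≥0∞) ^ q) ^ (p.toReal / q) := by
              refine tsum_congr fun l => ?_
              rw [← ENNReal.rpow_mul]
              congr 1
              field_simp
          _ ≤ _ := h
      have h1 : schurSP p.toReal (commM a φ ε k j) ≤ b ^ (p.toReal / q) := by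
        refine iSup_le fun r => le_trans (per r) ?_
        exact ENNReal.rpow_le_rpow
          (le_iSup (fun r : Γ => ∑' l : Λ, (‖commM a φ ε k j l r‖₊ : ℝ≥0∞) ^ q) r)
          (by positivity)
      calc schurSP p.toReal (commM a φ ε k j) ^ (q / p.toReal)
          ≤ (b ^ (p.toReal / q)) ^ (q / p.toReal) := ENNReal.rpow_le_rpow h1 (by positivity)
        _ = b := by
            rw [← ENNReal.rpow_mul]
            have he : (p.toReal / q) * (q / p.toReal) = 1 := by
              field_simp
            rw [he, ENNReal.rpow_one]
    · refine iSup_le fun r => le_trans (col r) ?_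
      exact mul_le_mul_left (le_trans le_self_add hofC) _
  · -- 1 < p
    intro _
    have hAq : ∀ r : Γ, ((∑' l : Λ, (‖commM a φ ε k j l r‖₊ : ℝ≥0∞))) ^ q
        ≤ ((d^d*NΛ : ℕ) : ℝ≥0∞) * DeltaE H ε q (k - j) := fun r =>
      le_trans (rpow_tsum_le _ hq0' hq1) (col r)
    have hBq : ∀ l : Λ, ((∑' r : Γ, (‖commM a φ ε k j l r‖₊ : ℝ≥0∞))) ^ q
        ≤ ((d^d*NΓ : ℕ) : ℝ≥0∞) * DeltaE H ε q (k - j) := fun l =>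
      le_trans (rpow_tsum_le _ hq0' hq1) (row l)
    have invq : ∀ S K : ℝ≥0∞, S ^ q ≤ K → S ≤ K ^ (1/q) := by
      intro S K h
      have h2 := ENNReal.rpow_le_rpow h (by positivity : (0:ℝ) ≤ 1/q)
      rwa [← ENNReal.rpow_mul, mul_one_div_cancel hq0'.ne', ENNReal.rpow_one] at h2
    have qinv : ∀ S K : ℝ≥0∞, S ≤ K ^ (1/q) → S ^ q ≤ K := by
      intro S K h
      have h2 := ENNReal.rpow_le_rpow h hq0'.le
      rwa [← ENNReal.rpow_mul, one_div_mul_cancel hq0'.ne', ENNReal.rpow_one] at h2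
    have hA : (⨆ r : Γ, ∑' l : Λ, (‖commM a φ ε k j l r‖₊ : ℝ≥0∞)) ^ q
        ≤ ((d^d*NΛ : ℕ) : ℝ≥0∞) * DeltaE H ε q (k - j) := by
      refine qinv _ _ (iSup_le fun r => invq _ _ (hAq r))
    have hB : (⨆ l : Λ, ∑' r : Γ, (‖commM a φ ε k j l r‖₊ : ℝ≥0∞)) ^ q
        ≤ ((d^d*NΓ : ℕ) : ℝ≥0∞) * DeltaE H ε q (k - j) := by
      refine qinv _ _ (iSup_le fun l => invq _ _ (hBq l))
    calc schurE (commM a φ ε k j) ^ q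
        ≤ (⨆ r : Γ, ∑' l : Λ, (‖commM a φ ε k j l r‖₊ : ℝ≥0∞)) ^ q
          + (⨆ l : Λ, ∑' r : Γ, (‖commM a φ ε k j l r‖₊ : ℝ≥0∞)) ^ q :=
          ENNReal.rpow_add_le_add_rpow _ _ hq0'.le hq1
      _ ≤ ((d^d*NΛ : ℕ) : ℝ≥0∞) * DeltaE H ε q (k - j)
          + ((d^d*NΓ : ℕ) : ℝ≥0∞) * DeltaE H ε q (k - j) := add_le_add hA hB
      _ = (((d^d*NΛ : ℕ) : ℝ≥0∞) + ((d^d*NΓ : ℕ) : ℝ≥0∞)) * DeltaE H ε q (k - j) :=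
          (add_mul _ _ _).symm
      _ ≤ ENNReal.ofReal ((d^d*NΛ + d^d*NΓ + 1 : ℕ) : ℝ) * DeltaE H ε q (k - j) :=
          mul_le_mul_left hofC _


end
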